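/- For every λ ∈ X⁺ and every k ≥ 1: E^k_λ = ∑_{(μ₀,…,μ_{k−1}) ∈ (X⁺)^k} ( ∏_{0≤h≤k−2} p_{μ_h, λ^h + p·μ_{h+1}} ) · p_{μ_{k−1}, ∑_{j≥k−1} p^{j−k+1} λ^j} · E⁰_{μ₀}, a sum with only finitely many nonzero terms. -/

import Mathlib

/-!
Setting: `X⁺ = I → ℕ` (componentwise addition) for a finite index set `I`, `p ≥ 2`.
`digit p lam k` is the `k`-th base-`p` digit `λ^k` of `lam` (so `λ^k ∈ X⁺_red` and
`lam = ∑_k p^k • λ^k`); `shift p k lam = ∑_{j≥k} p^{j-k} λ^j`;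
`trunc p k lam = ∑_{0≤j≤k-1} p^j λ^j`.
-/

namespace LusztigChar

variable {I : Type*} [Fintype I] {R : Type*} [CommRing R]

/-- The `k`-th digit `λ^k` of `λ ∈ X⁺ = I → ℕ` in base `p`. -/
def digit (p : ℕ) (lam : I → ℕ) (k : ℕ) : I → ℕ := fun i => lam i / p ^ k % p

/-- `∑_{j≥k} p^{j-k} λ^j ∈ X⁺` (a sum with finitely many nonzero terms). -/
noncomputable def shift (p k : ℕ) (lam : I → ℕ) : I → ℕ :=
  ∑ᶠ j : ℕ, p ^ j • digit p lam (k + j)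

/-- `∑_{0≤j≤k-1} p^j λ^j ∈ X⁺`. -/
def trunc (p k : ℕ) (lam : I → ℕ) : I → ℕ :=
  ∑ j ∈ Finset.range k, p ^ j • digit p lam j

/-- The recursive family `E^k : X⁺ → R` built from `E⁰ = E0` and the integers
`p_{μ,λ} = P μ λ`:  `E^k_λ = ∑_μ p_{μ, ∑_{j≥k-1} p^{j-k+1} λ^j} · E^{k-1}_{∑_{0≤j≤k-2} p^j λ^j + p^{k-1} μ}`
for `k ≥ 1`. -/
noncomputable def E (p : ℕ) (P : (I → ℕ) → (I → ℕ) → ℤ) (E0 : (I → ℕ) → R) :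
    ℕ → (I → ℕ) → R
  | 0 => E0
  | k + 1 => fun lam =>
      ∑ᶠ mu : I → ℕ, P mu (shift p k lam) • E p P E0 k (trunc p k lam + p ^ k • mu)

/-!
Unfolding the recursion once, `E^{k+1}_λ = ∑_a p_{a, λ'} • E^k_{ν_a}` with
`λ' = ∑_{j≥k} p^{j-k} λ^j` and `ν_a = ∑_{j<k} p^j λ^j + p^k a`. The point `ν_a` has the same
digits as `λ` below `k`, and `∑_{j≥k-1} p^{j-k+1} ν_a^j = λ^{k-1} + p a`, so the formula for
`E^k_{ν_a}` is the formula for `E^{k+1}_λ` with the last index `μ_k = a` fixed.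
All sums are finite because `p_{μ,λ} ≠ 0` forces `N μ ≤ N λ`, and `x i ≤ N x` for all `i`.
-/

open Function

section Digits

variable {I : Type*} {p : ℕ}

theorem trunc_apply (p k : ℕ) (lam : I → ℕ) (i : I) : trunc p k lam i = lam i % p ^ k := by
  induction k with
  | zero => simp [trunc, Nat.mod_one]
  | succ k ih =>
    simp only [trunc, Finset.sum_range_succ, Finset.sum_apply, Pi.smul_apply, smul_eq_mul] at ih ⊢
    rw [ih, Nat.mod_pow_succ, digit]

theorem digit_eq_of_mod_eq {k h : ℕ} (hh : h < k) {x y : I → ℕ}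
    (hxy : ∀ i, x i % p ^ k = y i % p ^ k) : digit p x h = digit p y h := by
  have hdigit : ∀ z : ℕ, z / p ^ h % p = z % p ^ k % p ^ (h + 1) / p ^ h := fun z => by
    rw [Nat.mod_mod_of_dvd _ (pow_dvd_pow p hh), pow_succ, Nat.mod_mul_right_div_self]
  funext i
  simp only [digit, hdigit (x i), hdigit (y i), hxy i]

theorem digit_trunc_add_pow_smul {k h : ℕ} (hh : h < k) (lam mu : I → ℕ) :
    digit p (trunc p k lam + p ^ k • mu) h = digit p lam h :=
  digit_eq_of_mod_eq hh fun i => by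
    simp only [Pi.add_apply, Pi.smul_apply, smul_eq_mul, trunc_apply, Nat.add_mul_mod_self_left,
      Nat.mod_mod]

theorem finsum_pow_smul_digit [Finite I] (hp : 1 < p) (lam : I → ℕ) :
    ∑ᶠ j, p ^ j • digit p lam j = lam := by
  obtain ⟨B, hB⟩ := (Set.finite_range lam).bddAbove
  have hlt : ∀ i, lam i < p ^ B := fun i => (hB ⟨i, rfl⟩).trans_lt (Nat.lt_pow_self hp)
  have hsupp : support (fun j => p ^ j • digit p lam j) ⊆ Finset.range B := by
    intro j hj
    by_contra hjB
    have hle : p ^ B ≤ p ^ j := Nat.pow_le_pow_right (by omega) (by simpa using hjB)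
    refine hj ?_
    ext i
    simp [digit, Nat.div_eq_of_lt ((hlt i).trans_le hle)]
  rw [finsum_eq_sum_of_support_subset _ hsupp]
  funext i
  exact (trunc_apply p B lam i).trans (Nat.mod_eq_of_lt (hlt i))

theorem shift_eq_div [Finite I] (hp : 1 < p) (k : ℕ) (lam : I → ℕ) :
    shift p k lam = fun i => lam i / p ^ k := by
  have hdigit : ∀ j, digit p lam (k + j) = digit p (fun i => lam i / p ^ k) j := fun j =>
    funext fun i => by simp only [digit, Nat.div_div_eq_div_mul, pow_add]
  rw [← finsum_pow_smul_digit hp fun i => lam i / p ^ k]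
  simp only [shift, hdigit]

theorem shift_trunc_add_pow_smul [Finite I] (hp : 1 < p) (k : ℕ) (lam mu : I → ℕ) :
    shift p k (trunc p (k + 1) lam + p ^ (k + 1) • mu) = digit p lam k + p • mu := by
  rw [shift_eq_div hp]
  funext i
  simp only [Pi.add_apply, Pi.smul_apply, smul_eq_mul, trunc_apply, digit]
  rw [pow_succ, mul_assoc, Nat.add_mul_div_left _ _ (pow_pos (by omega) k),
    Nat.mod_mul_right_div_self]

end Digits

section Sublevel

variable {I : Type*} (N : (I → ℕ) →+ ℕ)

theorem apply_le_map (hN_zero : ∀ a, N a = 0 → a = 0) (x : I → ℕ) (i : I) : x i ≤ N x := by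
  classical
  have hsingle : 1 ≤ N (Pi.single i 1) :=
    Nat.one_le_iff_ne_zero.2 fun h => by simpa using congrFun (hN_zero _ h) i
  have hx : x = x i • Pi.single i 1 + update x i 0 := by
    ext j
    by_cases hj : j = i <;> simp [hj]
  calc x i ≤ x i * N (Pi.single i 1) := Nat.le_mul_of_pos_right _ hsingle
    _ ≤ N x := by
      conv_rhs => rw [hx]
      rw [map_add, map_nsmul, smul_eq_mul]
      exact Nat.le_add_right _ _

theorem finite_setOf_map_le [Finite I] (hN_zero : ∀ a, N a = 0 → a = 0) (n : ℕ) :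
    {x | N x ≤ n}.Finite :=
  (Set.Finite.pi fun _ => Set.finite_Iic n).subset fun x hx i _ =>
    (apply_le_map N hN_zero x i).trans hx

theorem finite_support_left [Finite I] (hN_zero : ∀ a, N a = 0 → a = 0)
    (le : (I → ℕ) → (I → ℕ) → Prop) (hN_mono : ∀ a b, le a b → N a ≤ N b)
    (P : (I → ℕ) → (I → ℕ) → ℤ) (hP_le : ∀ mu lam, P mu lam ≠ 0 → le mu lam) (lam : I → ℕ) :
    (support fun mu => P mu lam).Finite :=
  (finite_setOf_map_le N hN_zero (N lam)).subset fun _ h => hN_mono _ _ (hP_le _ _ h)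

end Sublevel

theorem finite_support_smul_prod {α β R M : Type*} [Zero R] [Zero M] [SMulWithZero R M]
    (c : α → R) (g : α → β → M) (hc : (support c).Finite) (hg : ∀ a, (support (g a)).Finite) :
    (support fun q : α × β => c q.1 • g q.1 q.2).Finite := by
  refine (hc.biUnion fun a _ => (hg a).image (Prod.mk a)).subset ?_
  rintro ⟨a, b⟩ hab
  simp only [Set.mem_iUnion, Set.mem_image, Prod.mk.injEq]
  exact ⟨a, left_ne_zero_of_smul hab, b, right_ne_zero_of_smul hab, rfl, rfl⟩

section Chains

variable {I M : Type*} [AddCommGroup M] (p : ℕ) (P : (I → ℕ) → (I → ℕ) → ℤ) (E0 : (I → ℕ) → M)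

/-- `d h` stands for the digit `λ^h` and `S` for the top weight `∑_{j≥k} p^{j-k} λ^j`. -/
def chainTerm (d : ℕ → I → ℕ) (S : I → ℕ) (k : ℕ) (mu : Fin (k + 1) → I → ℕ) : M :=
  ((∏ h : Fin k, P (mu h.castSucc) (d h + p • mu h.succ)) * P (mu (Fin.last k)) S) • E0 (mu 0)

theorem chainTerm_congr {d d' : ℕ → I → ℕ} {k : ℕ} (hd : ∀ j < k, d j = d' j) (S : I → ℕ) :
    chainTerm p P E0 d S k = chainTerm p P E0 d' S k := by
  have hd' : ∀ h : Fin k, d h = d' h := fun h => hd h h.isLt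
  funext mu
  simp only [chainTerm, hd']

theorem chainTerm_snoc (d : ℕ → I → ℕ) (S : I → ℕ) (k : ℕ) (a : I → ℕ)
    (mu : Fin (k + 1) → I → ℕ) :
    chainTerm p P E0 d S (k + 1) (Fin.snoc mu a) =
      P a S • chainTerm p P E0 d (d k + p • a) k mu := by
  have h0 : (Fin.snoc mu a : Fin (k + 2) → I → ℕ) 0 = mu 0 := Fin.snoc_castSucc (i := 0) ..
  simp only [chainTerm, Fin.prod_univ_castSucc, Fin.snoc_castSucc, Fin.snoc_last, Fin.succ_last,
    Fin.val_castSucc, Fin.succ_castSucc, Fin.val_last, h0, smul_smul]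
  congr 1
  ring

theorem chainTerm_zero_finsum (hP : ∀ S, (support fun mu => P mu S).Finite) (d : ℕ → I → ℕ)
    (S : I → ℕ) :
    (support (chainTerm p P E0 d S 0)).Finite ∧
      ∑ᶠ mu, chainTerm p P E0 d S 0 mu = ∑ᶠ a, P a S • E0 a := by
  have hcomp : chainTerm p P E0 d S 0 = (fun a => P a S • E0 a) ∘ Equiv.funUnique (Fin 1) _ := by
    funext mu
    simp [chainTerm]
  rw [hcomp, support_comp_eq_preimage]
  exact ⟨((hP S).subset (support_smul_subset_left _ _)).preimage (Equiv.injective _).injOn,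
    finsum_comp_equiv (f := fun a => P a S • E0 a) _⟩

theorem chainTerm_succ_finsum (hP : ∀ S, (support fun mu => P mu S).Finite) (d : ℕ → I → ℕ)
    (S : I → ℕ) (k : ℕ) (hk : ∀ a, (support (chainTerm p P E0 d (d k + p • a) k)).Finite) :
    (support (chainTerm p P E0 d S (k + 1))).Finite ∧
      ∑ᶠ mu, chainTerm p P E0 d S (k + 1) mu =
        ∑ᶠ a, P a S • ∑ᶠ mu, chainTerm p P E0 d (d k + p • a) k mu := by
  set e := Fin.snocEquiv fun _ : Fin (k + 2) => I → ℕ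
  have hprod := finite_support_smul_prod (P · S) _ (hP S) hk
  have hcomp : chainTerm p P E0 d S (k + 1) ∘ e =
      fun q => P q.1 S • chainTerm p P E0 d (d k + p • q.1) k q.2 :=
    funext fun q => chainTerm_snoc p P E0 d S k q.1 q.2
  refine ⟨.of_preimage ?_ e.surjective, ?_⟩
  · rwa [← support_comp_eq_preimage, hcomp]
  · rw [← finsum_comp_equiv e, ← comp_def, hcomp, finsum_curry _ hprod]
    exact finsum_congr fun a => (smul_finsum' (P a S) (hk a)).symm

end Chains

theorem E_succ_eq_finsum_chainTerm {I R : Type*} [Finite I] [CommRing R] {p : ℕ} (hp : 1 < p)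
    {P : (I → ℕ) → (I → ℕ) → ℤ} (hP : ∀ S, (support fun mu => P mu S).Finite)
    (E0 : (I → ℕ) → R) (k : ℕ) (lam : I → ℕ) :
    (support (chainTerm p P E0 (digit p lam) (shift p k lam) k)).Finite ∧
      E p P E0 (k + 1) lam = ∑ᶠ mu, chainTerm p P E0 (digit p lam) (shift p k lam) k mu := by
  induction k generalizing lam with
  | zero =>
    have hE : E p P E0 1 lam = ∑ᶠ a, P a (shift p 0 lam) • E0 a := by simp [E, trunc]
    obtain ⟨hfin, hsum⟩ := chainTerm_zero_finsum p P E0 hP (digit p lam) (shift p 0 lam)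
    exact ⟨hfin, hE.trans hsum.symm⟩
  | succ k ih =>
    set nu := fun a => trunc p (k + 1) lam + p ^ (k + 1) • a
    have hnu : ∀ a, chainTerm p P E0 (digit p (nu a)) (shift p k (nu a)) k =
        chainTerm p P E0 (digit p lam) (digit p lam k + p • a) k := fun a => by
      rw [shift_trunc_add_pow_smul hp]
      exact chainTerm_congr p P E0 (fun j hj => digit_trunc_add_pow_smul (by omega) lam a) _
    obtain ⟨hfin, hsum⟩ := chainTerm_succ_finsum p P E0 hP (digit p lam) (shift p (k + 1) lam) k
      fun a => hnu a ▸ (ih (nu a)).1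
    refine ⟨hfin, ?_⟩
    rw [hsum, E]
    exact finsum_congr fun a => by rw [(ih (nu a)).2, hnu a]

theorem E_eq_sum_prod_p_E_zero_general {I : Type*} [Fintype I] {R : Type*} [CommRing R]
    (p : ℕ) (hp : 2 ≤ p)
    (le : (I → ℕ) → (I → ℕ) → Prop)
    (N : (I → ℕ) →+ ℕ)
    (hN_zero : ∀ a, N a = 0 → a = 0)
    (hN_mono : ∀ a b, le a b → N a ≤ N b)
    (P : (I → ℕ) → (I → ℕ) → ℤ)
    (hP_le : ∀ mu lam, P mu lam ≠ 0 → le mu lam)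
    (E0 : (I → ℕ) → R) (k : ℕ) (lam : I → ℕ) :
    (Function.support fun mu : Fin (k + 1) → I → ℕ =>
      ((∏ h : Fin k, P (mu h.castSucc) (digit p lam (h : ℕ) + p • mu h.succ)) *
        P (mu (Fin.last k)) (shift p k lam)) • E0 (mu 0)).Finite ∧
    E p P E0 (k + 1) lam =
      ∑ᶠ mu : Fin (k + 1) → I → ℕ,
        ((∏ h : Fin k, P (mu h.castSucc) (digit p lam (h : ℕ) + p • mu h.succ)) *
          P (mu (Fin.last k)) (shift p k lam)) • E0 (mu 0) :=
  E_succ_eq_finsum_chainTerm hp (finite_support_left N hN_zero le hN_mono P hP_le) E0 k lam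

/-- paper 4(c): for every `λ ∈ X⁺` and `k ≥ 1` (here written `k + 1`),
`E^{k+1}_λ = ∑_{(μ₀,…,μ_k)} (∏_{0≤h≤k-1} p_{μ_h, λ^h + p·μ_{h+1}}) · p_{μ_k, ∑_{j≥k} p^{j-k} λ^j} · E⁰_{μ₀}`,
a sum with finitely many nonzero terms. -/
theorem E_eq_sum_prod_p_E_zero {I : Type*} [Fintype I] {R : Type*} [CommRing R]
    (p : ℕ) (hp : 2 ≤ p)
    (le : (I → ℕ) → (I → ℕ) → Prop)
    (hle_refl : ∀ a, le a a)
    (hle_antisymm : ∀ a b, le a b → le b a → a = b)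
    (hle_trans : ∀ a b c, le a b → le b c → le a c)
    (N : (I → ℕ) →+ ℕ)
    (hN_zero : ∀ a, N a = 0 → a = 0)
    (hN_mono : ∀ a b, le a b → N a ≤ N b)
    (P : (I → ℕ) → (I → ℕ) → ℤ)
    (hP_le : ∀ mu lam, P mu lam ≠ 0 → le mu lam)
    (hP_diag : ∀ lam, P lam lam = 1)
    (E0 : (I → ℕ) → R) (k : ℕ) (lam : I → ℕ) :
    (Function.support fun mu : Fin (k + 1) → I → ℕ =>
      ((∏ h : Fin k, P (mu h.castSucc) (digit p lam (h : ℕ) + p • mu h.succ)) *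
        P (mu (Fin.last k)) (shift p k lam)) • E0 (mu 0)).Finite ∧
    E p P E0 (k + 1) lam =
      ∑ᶠ mu : Fin (k + 1) → I → ℕ,
        ((∏ h : Fin k, P (mu h.castSucc) (digit p lam (h : ℕ) + p • mu h.succ)) *
          P (mu (Fin.last k)) (shift p k lam)) • E0 (mu 0) :=
  E_eq_sum_prod_p_E_zero_general p hp le N hN_zero hN_mono P hP_le E0 k lam

end LusztigChar
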